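/- arXiv:1709.06672 — 10 statements merged into one kernel-verified Lean document; each statement's English description precedes it below -/
import Mathlib

section
/- For every n ∈ {3,4,5}, every theorem of E5Ln⁻ is a theorem of E6Ln⁻; in particular, the formulas □(Kφ→KKφ) and □(¬Kφ→K¬Kφ) are theorems of E6Ln⁻ for every formula φ. -/
/-- Formulas of the full modal-epistemic language `Fm`. -/
inductive Fm : Type
  | var : Nat → Fm
  | bot : Fm
  | and : Fm → Fm → Fm
  | or : Fm → Fm → Fm
  | imp : Fm → Fm → Fm
  | box : Fm → Fm
  | k : Fm → Fm

namespace Fm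

def neg (φ : Fm) : Fm := φ.imp Fm.bot

def top : Fm := Fm.neg Fm.bot

def biimp (φ ψ : Fm) : Fm := (φ.imp ψ).and (ψ.imp φ)

/-- Propositional identity as strict equivalence: `φ ≡ ψ := □(φ↔ψ)`. -/
def equiv (φ ψ : Fm) : Fm := Fm.box (Fm.biimp φ ψ)

def diam (φ : Fm) : Fm := Fm.neg (Fm.box (Fm.neg φ))

end Fm

/-- Hilbert-style axiom schemes for intuitionistic propositional logic,
instantiated over the full language (so that together with closure under MP
this yields exactly all substitution-instances of theorems of IPC). -/
inductive IPCAx : Fm → Prop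
  | k1 (φ ψ : Fm) : IPCAx (φ.imp (ψ.imp φ))
  | k2 (φ ψ χ : Fm) : IPCAx ((φ.imp (ψ.imp χ)).imp ((φ.imp ψ).imp (φ.imp χ)))
  | andI (φ ψ : Fm) : IPCAx (φ.imp (ψ.imp (φ.and ψ)))
  | andE1 (φ ψ : Fm) : IPCAx ((φ.and ψ).imp φ)
  | andE2 (φ ψ : Fm) : IPCAx ((φ.and ψ).imp ψ)
  | orI1 (φ ψ : Fm) : IPCAx (φ.imp (φ.or ψ))
  | orI2 (φ ψ : Fm) : IPCAx (ψ.imp (φ.or ψ))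
  | orE (φ ψ χ : Fm) : IPCAx ((φ.imp χ).imp ((ψ.imp χ).imp ((φ.or ψ).imp χ)))
  | efq (φ : Fm) : IPCAx (Fm.bot.imp φ)

/-- Scheme (INT): all theorems of IPC and their substitution-instances. -/
inductive IPCThm : Fm → Prop
  | ax {φ : Fm} : IPCAx φ → IPCThm φ
  | mp {φ ψ : Fm} : IPCThm (φ.imp ψ) → IPCThm φ → IPCThm ψ

/-- A specification of a logic of the hierarchy: all logics contain (INT), (A1),
(A2), (A3); the flags indicate which further axiom schemes are present. -/
structure LogicSpec : Type where
  hasA4 : Prop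
  hasA5 : Prop
  hasKBel : Prop
  hasCoRe : Prop
  hasIntRe : Prop
  hasE4 : Prop
  hasE5 : Prop
  hasPNB : Prop
  hasNNB : Prop

/-- The axioms of the logic specified by `S`. -/
inductive IsAxiom (S : LogicSpec) : Fm → Prop
  | int {φ : Fm} : IPCThm φ → IsAxiom S φ
  | a1 (φ ψ : Fm) : IsAxiom S ((Fm.box (φ.or ψ)).imp ((Fm.box φ).or (Fm.box ψ)))
  | a2 (φ : Fm) : IsAxiom S ((Fm.box φ).imp φ)
  | a3 (φ ψ : Fm) : IsAxiom S ((Fm.box (φ.imp ψ)).imp (Fm.box ((Fm.box φ).imp (Fm.box ψ))))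
  | a4 (φ : Fm) : S.hasA4 → IsAxiom S ((Fm.box φ).imp (Fm.box (Fm.box φ)))
  | a5 (φ : Fm) : S.hasA5 → IsAxiom S ((Fm.neg (Fm.box φ)).imp (Fm.box (Fm.neg (Fm.box φ))))
  | kbel (φ ψ : Fm) : S.hasKBel → IsAxiom S ((Fm.k (φ.imp ψ)).imp ((Fm.k φ).imp (Fm.k ψ)))
  | core (φ : Fm) : S.hasCoRe → IsAxiom S ((Fm.box φ).imp (Fm.box (Fm.k φ)))
  | intre (φ : Fm) : S.hasIntRe → IsAxiom S ((Fm.k φ).imp (Fm.neg (Fm.neg φ)))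
  | e4 (φ : Fm) : S.hasE4 → IsAxiom S ((Fm.k φ).imp (Fm.k (Fm.k φ)))
  | e5 (φ : Fm) : S.hasE5 → IsAxiom S ((Fm.neg (Fm.k φ)).imp (Fm.k (Fm.neg (Fm.k φ))))
  | pnb (φ : Fm) : S.hasPNB → IsAxiom S ((Fm.k φ).imp (Fm.box (Fm.k φ)))
  | nnb (φ : Fm) : S.hasNNB → IsAxiom S ((Fm.neg (Fm.k φ)).imp (Fm.box (Fm.neg (Fm.k φ))))

/-- Derivations from the hypotheses `Φ` over the axiom set `Ax`.  The parameter
`tnd` controls whether instances of the theorem scheme (TND) `φ ∨ ¬φ` may be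
used.  The rules are Modus Ponens (MP) and Axiom Necessitation (AN), the latter
applying to axioms only (not to (TND) instances nor to theorems). -/
inductive Deriv (Ax : Fm → Prop) (tnd : Prop) (Φ : Set Fm) : Fm → Prop
  | ax {φ : Fm} : Ax φ → Deriv Ax tnd Φ φ
  | hyp {φ : Fm} : φ ∈ Φ → Deriv Ax tnd Φ φ
  | tnd (φ : Fm) : tnd → Deriv Ax tnd Φ (φ.or (Fm.neg φ))
  | an {φ : Fm} : Ax φ → Deriv Ax tnd Φ (Fm.box φ)
  | mp {φ ψ : Fm} : Deriv Ax tnd Φ (φ.imp ψ) → Deriv Ax tnd Φ φ → Deriv Ax tnd Φ ψ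

/-- `Φ ⊢_S φ`. -/
def Derives (S : LogicSpec) (Φ : Set Fm) (φ : Fm) : Prop := Deriv (IsAxiom S) True Φ φ

/-- `⊢_S φ`. -/
def Thm (S : LogicSpec) (φ : Fm) : Prop := Derives S ∅ φ

/-- The modal logic `Ln` (n ∈ {3,4,5}): (INT)+(A1)+(A2)+(A3), plus (A4) if n ≥ 4
and (A5) if n ≥ 5. -/
def Lspec (n : Nat) : LogicSpec :=
  ⟨4 ≤ n, 5 ≤ n, False, False, False, False, False, False, False⟩

/-- `ELn⁻ = Ln + (KBel) + (CoRe)`. -/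
def ELmSpec (n : Nat) : LogicSpec :=
  ⟨4 ≤ n, 5 ≤ n, True, True, False, False, False, False, False⟩

/-- `E4Ln⁻ = ELn⁻ + (E4)`. -/
def E4LmSpec (n : Nat) : LogicSpec := { ELmSpec n with hasE4 := True }

/-- `E5Ln⁻ = E4Ln⁻ + (E5)`. -/
def E5LmSpec (n : Nat) : LogicSpec := { E4LmSpec n with hasE5 := True }

/-- `E6Ln⁻ = ELn⁻ + (PNB) + (NNB)`. -/
def E6LmSpec (n : Nat) : LogicSpec := { ELmSpec n with hasPNB := True, hasNNB := True }

/-- `ELn = ELn⁻ + (IntRe)`. -/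
def ELSpec (n : Nat) : LogicSpec := { ELmSpec n with hasIntRe := True }

def E4LSpec (n : Nat) : LogicSpec := { E4LmSpec n with hasIntRe := True }

def E5LSpec (n : Nat) : LogicSpec := { E5LmSpec n with hasIntRe := True }

def E6LSpec (n : Nat) : LogicSpec := { E6LmSpec n with hasIntRe := True }

/-- Membership in the hierarchy of logics considered in the paper. -/
def InHierarchy (S : LogicSpec) : Prop :=
  ∃ n, n ∈ ({3, 4, 5} : Set Nat) ∧
    (S = Lspec n ∨ S = ELmSpec n ∨ S = E4LmSpec n ∨ S = E5LmSpec n ∨ S = E6LmSpec n ∨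
      S = ELSpec n ∨ S = E4LSpec n ∨ S = E5LSpec n ∨ S = E6LSpec n)

/-- The S5-style logics: `EL5⁻`, `EL5`, `EkL5⁻`, `EkL5` for k ∈ {4,5,6}. -/
def L5Logics : Set LogicSpec :=
  {ELmSpec 5, E4LmSpec 5, E5LmSpec 5, E6LmSpec 5, ELSpec 5, E4LSpec 5, E5LSpec 5, E6LSpec 5}

/-!
In E6Ln⁻ the schemes (E4) and (E5) hold even under `□`: for `ψ = Kφ` resp. `ψ = ¬Kφ`,
necessitated (PNB) resp. (NNB) gives `□(ψ → □ψ)`, necessitated (CoRe) gives `□(□ψ → □Kψ)`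
and necessitated (A2) gives `□(□Kψ → Kψ)`. So E6Ln⁻ proves the necessitation of every axiom
of E5Ln⁻, and since (A2) recovers each axiom from its necessitation, every E5Ln⁻-derivation
can be replayed in E6Ln⁻.
-/

theorem IPCThm.trans {a b c : Fm} (hab : IPCThm (a.imp b)) (hbc : IPCThm (b.imp c)) :
    IPCThm (a.imp c) :=
  .mp (.mp (.ax (.k2 a b c)) (.mp (.ax (.k1 (b.imp c) a)) hbc)) hab

theorem IPCThm.imp_comp (a b c : Fm) : IPCThm ((b.imp c).imp ((a.imp b).imp (a.imp c))) :=
  .trans (.ax (.k1 (b.imp c) a)) (.ax (.k2 a b c))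

namespace Derives

variable {S T : LogicSpec} {Φ : Set Fm}

theorem of_box {φ : Fm} (h : Derives S Φ (Fm.box φ)) : Derives S Φ φ :=
  .mp (.ax (.a2 φ)) h

theorem box_mp {φ ψ : Fm} (hφψ : Derives S Φ (Fm.box (φ.imp ψ)))
    (hφ : Derives S Φ (Fm.box φ)) : Derives S Φ (Fm.box ψ) :=
  .mp (of_box (.mp (.ax (.a3 φ ψ)) hφψ)) hφ

theorem box_imp_trans {a b c : Fm} (hab : Derives S Φ (Fm.box (a.imp b)))
    (hbc : Derives S Φ (Fm.box (b.imp c))) : Derives S Φ (Fm.box (a.imp c)) :=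
  box_mp (box_mp (.an (.int (IPCThm.imp_comp a b c))) hbc) hab

theorem box_imp_k_of_imp_box (hCoRe : S.hasCoRe) {ψ : Fm} (hψ : IsAxiom S (ψ.imp (Fm.box ψ))) :
    Derives S Φ (Fm.box (ψ.imp (Fm.k ψ))) :=
  box_imp_trans (box_imp_trans (.an hψ) (.an (.core ψ hCoRe))) (.an (.a2 (Fm.k ψ)))

theorem box_e4_of_pnb (hCoRe : S.hasCoRe) (hPNB : S.hasPNB) (φ : Fm) :
    Derives S Φ (Fm.box ((Fm.k φ).imp (Fm.k (Fm.k φ)))) :=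
  box_imp_k_of_imp_box hCoRe (.pnb φ hPNB)

theorem box_e5_of_nnb (hCoRe : S.hasCoRe) (hNNB : S.hasNNB) (φ : Fm) :
    Derives S Φ (Fm.box ((Fm.neg (Fm.k φ)).imp (Fm.k (Fm.neg (Fm.k φ))))) :=
  box_imp_k_of_imp_box hCoRe (.nnb φ hNNB)

theorem of_box_axioms (hST : ∀ {φ : Fm}, IsAxiom S φ → Derives T Φ (Fm.box φ)) {φ : Fm}
    (h : Derives S Φ φ) : Derives T Φ φ := by
  induction h with
  | ax hφ => exact of_box (hST hφ)
  | hyp hφ => exact .hyp hφ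
  | tnd φ h => exact .tnd φ h
  | an hφ => exact hST hφ
  | mp _ _ ihφψ ihφ => exact .mp ihφψ ihφ

theorem box_axiom_E6Lm_of_E5Lm {n : Nat} {φ : Fm} (hφ : IsAxiom (E5LmSpec n) φ) :
    Derives (E6LmSpec n) Φ (Fm.box φ) := by
  cases hφ with
  | int h => exact .an (.int h)
  | a1 φ ψ => exact .an (.a1 φ ψ)
  | a2 φ => exact .an (.a2 φ)
  | a3 φ ψ => exact .an (.a3 φ ψ)
  | a4 φ h => exact .an (.a4 φ h)
  | a5 φ h => exact .an (.a5 φ h)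
  | kbel φ ψ _ => exact .an (.kbel φ ψ trivial)
  | core φ _ => exact .an (.core φ trivial)
  | e4 φ _ => exact box_e4_of_pnb trivial trivial φ
  | e5 φ _ => exact box_e5_of_nnb trivial trivial φ
  | intre _ h | pnb _ h | nnb _ h => exact h.elim

end Derives

theorem stmt0_general (n : Nat) :
    (∀ φ : Fm, Thm (E5LmSpec n) φ → Thm (E6LmSpec n) φ) ∧
    (∀ φ : Fm,
      Thm (E6LmSpec n) (Fm.box ((Fm.k φ).imp (Fm.k (Fm.k φ)))) ∧
      Thm (E6LmSpec n) (Fm.box ((Fm.neg (Fm.k φ)).imp (Fm.k (Fm.neg (Fm.k φ)))))) :=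
  ⟨fun _ => Derives.of_box_axioms Derives.box_axiom_E6Lm_of_E5Lm,
    fun φ => ⟨Derives.box_e4_of_pnb trivial trivial φ, Derives.box_e5_of_nnb trivial trivial φ⟩⟩

/-- For every n ∈ {3,4,5}, every theorem of `E5Ln⁻` is a theorem of
`E6Ln⁻`; in particular, `□(Kφ→KKφ)` and `□(¬Kφ→K¬Kφ)` are theorems of `E6Ln⁻`
for every formula `φ`. -/
theorem stmt0 (n : Nat) (hn : n ∈ ({3, 4, 5} : Set Nat)) :
    (∀ φ : Fm, Thm (E5LmSpec n) φ → Thm (E6LmSpec n) φ) ∧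
    (∀ φ : Fm,
      Thm (E6LmSpec n) (Fm.box ((Fm.k φ).imp (Fm.k (Fm.k φ)))) ∧
      Thm (E6LmSpec n) (Fm.box ((Fm.neg (Fm.k φ)).imp (Fm.k (Fm.neg (Fm.k φ)))))) :=
  stmt0_general n
end

section
/- Let 𝓛 be one of the logics of the hierarchy containing axiom scheme (A4). If φ is a theorem of 𝓛 that has a derivation in which no instance of the theorem scheme (TND) occurs, then □φ is a theorem of 𝓛. -/
/-! Induction on the TND-free derivation: an axiom is boxed by (AN); a conclusion `□ψ` of (AN)
becomes `□□ψ` by (A4); and (A3) followed by (A2) yields the rule "from `□(ψ → χ)` and `□ψ`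
infer `□χ`", which boxes Modus Ponens. Instances of (TND) are the only steps that cannot be
boxed this way. -/

namespace Deriv

variable {S : LogicSpec} {tnd : Prop} {Φ : Set Fm}

theorem box_mp {ψ χ : Fm} (himp : Deriv (IsAxiom S) tnd Φ (Fm.box (ψ.imp χ)))
    (hψ : Deriv (IsAxiom S) tnd Φ (Fm.box ψ)) : Deriv (IsAxiom S) tnd Φ (Fm.box χ) :=
  mp (mp (ax (IsAxiom.a2 _)) (mp (ax (IsAxiom.a3 _ _)) himp)) hψ

theorem box_box_of_isAxiom (hA4 : S.hasA4) {ψ : Fm} (hψ : IsAxiom S ψ) :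
    Deriv (IsAxiom S) tnd Φ (Fm.box (Fm.box ψ)) :=
  mp (ax (IsAxiom.a4 _ hA4)) (an hψ)

theorem box_of_tndFree (hA4 : S.hasA4) {φ : Fm} (h : Deriv (IsAxiom S) False ∅ φ) :
    Deriv (IsAxiom S) tnd Φ (Fm.box φ) := by
  induction h with
  | ax hax => exact an hax
  | hyp hmem => exact absurd hmem (Set.notMem_empty _)
  | tnd _ hfalse => exact hfalse.elim
  | an hax => exact box_box_of_isAxiom hA4 hax
  | mp _ _ ihImp ihArg => exact box_mp ihImp ihArg

end Deriv

theorem stmt1_general (S : LogicSpec) (hA4 : S.hasA4)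
    (φ : Fm) (h : Deriv (IsAxiom S) False ∅ φ) :
    Thm S (Fm.box φ) :=
  Deriv.box_of_tndFree hA4 h

/-- Let `𝓛` be a logic of the hierarchy containing axiom scheme
(A4).  If `φ` is a theorem of `𝓛` having a derivation in which no instance of
the theorem scheme (TND) occurs, then `□φ` is a theorem of `𝓛`. -/
theorem stmt1 (S : LogicSpec) (hS : InHierarchy S) (hA4 : S.hasA4)
    (φ : Fm) (h : Deriv (IsAxiom S) False ∅ φ) :
    Thm S (Fm.box φ) :=
  stmt1_general S hA4 φ h
end

section
/- Let 𝓛 be a logic of the hierarchy containing (A4). The system obtained from 𝓛 by replacing axiom scheme (A3) with the distribution law □(φ→ψ)→(□φ→□ψ) and replacing (CoRe) □φ→□Kφ with the weaker scheme □φ→Kφ proves exactly the same theorems as 𝓛 (the two systems are deductively equivalent). -/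
/-- The axioms of the variant system: as `IsAxiom S`, but with (A3) replaced by
the usual distribution law `□(φ→ψ)→(□φ→□ψ)` and (CoRe) replaced by the weaker
scheme `□φ→Kφ`. -/
inductive IsAxiomVar (S : LogicSpec) : Fm → Prop
  | int {φ : Fm} : IPCThm φ → IsAxiomVar S φ
  | a1 (φ ψ : Fm) : IsAxiomVar S ((Fm.box (φ.or ψ)).imp ((Fm.box φ).or (Fm.box ψ)))
  | a2 (φ : Fm) : IsAxiomVar S ((Fm.box φ).imp φ)
  | dist (φ ψ : Fm) : IsAxiomVar S ((Fm.box (φ.imp ψ)).imp ((Fm.box φ).imp (Fm.box ψ)))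
  | a4 (φ : Fm) : S.hasA4 → IsAxiomVar S ((Fm.box φ).imp (Fm.box (Fm.box φ)))
  | a5 (φ : Fm) : S.hasA5 → IsAxiomVar S ((Fm.neg (Fm.box φ)).imp (Fm.box (Fm.neg (Fm.box φ))))
  | kbel (φ ψ : Fm) : S.hasKBel → IsAxiomVar S ((Fm.k (φ.imp ψ)).imp ((Fm.k φ).imp (Fm.k ψ)))
  | core (φ : Fm) : S.hasCoRe → IsAxiomVar S ((Fm.box φ).imp (Fm.k φ))
  | intre (φ : Fm) : S.hasIntRe → IsAxiomVar S ((Fm.k φ).imp (Fm.neg (Fm.neg φ)))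
  | e4 (φ : Fm) : S.hasE4 → IsAxiomVar S ((Fm.k φ).imp (Fm.k (Fm.k φ)))
  | e5 (φ : Fm) : S.hasE5 → IsAxiomVar S ((Fm.neg (Fm.k φ)).imp (Fm.k (Fm.neg (Fm.k φ))))
  | pnb (φ : Fm) : S.hasPNB → IsAxiomVar S ((Fm.k φ).imp (Fm.box (Fm.k φ)))
  | nnb (φ : Fm) : S.hasNNB → IsAxiomVar S ((Fm.neg (Fm.k φ)).imp (Fm.box (Fm.neg (Fm.k φ))))

/-! Each axiom of either system is a theorem of the other derived without (TND): for (A3),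
`□(φ→ψ) → □□(φ→ψ) → □(□φ→□ψ)` by (A4) and the necessitated distribution law; for (CoRe),
`□φ → □□φ → □Kφ` likewise; conversely distribution is (A3) followed by (A2), and `□φ→Kφ` is
(CoRe) followed by (A2). With (A4) and distribution, the TND-free theorems of either system are
closed under necessitation, so the (AN) steps of one system also translate into the other. -/

local prefix:max "□" => Fm.box

namespace Deriv

variable {Ax : Fm → Prop} {t : Prop} {Φ : Set Fm}

theorem mono_tnd {t' : Prop} (htt' : t → t') {φ : Fm} (h : Deriv Ax t Φ φ) :
    Deriv Ax t' Φ φ := by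
  induction h with
  | ax h => exact .ax h
  | hyp h => exact .hyp h
  | tnd φ h => exact .tnd φ (htt' h)
  | an h => exact .an h
  | mp _ _ ih₁ ih₂ => exact .mp ih₁ ih₂

theorem of_axioms {Ax' : Fm → Prop} (hax : ∀ χ, Ax χ → Deriv Ax' t Φ χ)
    (han : ∀ χ, Ax χ → Deriv Ax' t Φ (□χ)) {φ : Fm} (h : Deriv Ax t Φ φ) :
    Deriv Ax' t Φ φ := by
  induction h with
  | ax h => exact hax _ h
  | hyp h => exact .hyp h
  | tnd φ h => exact .tnd φ h
  | an h => exact han _ h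
  | mp _ _ ih₁ ih₂ => exact .mp ih₁ ih₂

theorem imp_trans (hint : ∀ χ, IPCThm χ → Ax χ) {a b c : Fm}
    (hab : Deriv Ax t Φ (a.imp b)) (hbc : Deriv Ax t Φ (b.imp c)) : Deriv Ax t Φ (a.imp c) :=
  .mp (.mp (.ax (hint _ (.ax (.k2 a b c)))) (.mp (.ax (hint _ (.ax (.k1 (b.imp c) a)))) hbc)) hab

theorem box_of_tnd_free
    (hdist : ∀ a b, Deriv Ax False ∅ ((□(a.imp b)).imp ((□a).imp (□b))))
    (h4 : ∀ a, Ax ((□a).imp (□□a))) {φ : Fm} (h : Deriv Ax False ∅ φ) :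
    Deriv Ax False ∅ (□φ) := by
  induction h with
  | ax h => exact .an h
  | hyp h => exact absurd h (Set.notMem_empty _)
  | tnd _ h => exact h.elim
  | @an χ h => exact .mp (.ax (h4 χ)) (.an h)
  | @mp a b _ _ ih₁ ih₂ => exact .mp (.mp (hdist a b) ih₁) ih₂

end Deriv

namespace IsAxiom

variable {S : LogicSpec} {t : Prop} {Φ : Set Fm}

theorem deriv_dist (φ ψ : Fm) :
    Deriv (IsAxiom S) t Φ ((□(φ.imp ψ)).imp ((□φ).imp (□ψ))) :=
  .imp_trans (fun _ => .int) (.ax (.a3 φ ψ)) (.ax (.a2 _))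

theorem deriv_box (hA4 : S.hasA4) {φ : Fm} (h : Deriv (IsAxiom S) False ∅ φ) :
    Deriv (IsAxiom S) False ∅ (□φ) :=
  .box_of_tnd_free deriv_dist (fun a => .a4 a hA4) h

end IsAxiom

namespace IsAxiomVar

variable {S : LogicSpec} {t : Prop} {Φ : Set Fm}

theorem deriv_box (hA4 : S.hasA4) {φ : Fm} (h : Deriv (IsAxiomVar S) False ∅ φ) :
    Deriv (IsAxiomVar S) False ∅ (□φ) :=
  .box_of_tnd_free (fun a b => .ax (.dist a b)) (fun a => .a4 a hA4) h

theorem deriv_box_imp_box (hA4 : S.hasA4) {a b : Fm} (h : IsAxiomVar S ((□a).imp b)) :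
    Deriv (IsAxiomVar S) t Φ ((□a).imp (□b)) :=
  .imp_trans (fun _ => .int) (.ax (.a4 a hA4)) (.mp (.ax (.dist (□a) b)) (.an h))

theorem deriv_isAxiom {φ : Fm} (h : IsAxiomVar S φ) : Deriv (IsAxiom S) t Φ φ := by
  cases h with
  | int h => exact .ax (.int h)
  | a1 φ ψ => exact .ax (.a1 φ ψ)
  | a2 φ => exact .ax (.a2 φ)
  | dist φ ψ => exact IsAxiom.deriv_dist φ ψ
  | a4 φ h => exact .ax (.a4 φ h)
  | a5 φ h => exact .ax (.a5 φ h)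
  | kbel φ ψ h => exact .ax (.kbel φ ψ h)
  | core φ h => exact .imp_trans (fun _ => .int) (.ax (.core φ h)) (.ax (.a2 _))
  | intre φ h => exact .ax (.intre φ h)
  | e4 φ h => exact .ax (.e4 φ h)
  | e5 φ h => exact .ax (.e5 φ h)
  | pnb φ h => exact .ax (.pnb φ h)
  | nnb φ h => exact .ax (.nnb φ h)

end IsAxiomVar

theorem IsAxiom.deriv_isAxiomVar {S : LogicSpec} {t : Prop} {Φ : Set Fm} (hA4 : S.hasA4)
    {φ : Fm} (h : IsAxiom S φ) : Deriv (IsAxiomVar S) t Φ φ := by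
  cases h with
  | int h => exact .ax (.int h)
  | a1 φ ψ => exact .ax (.a1 φ ψ)
  | a2 φ => exact .ax (.a2 φ)
  | a3 φ ψ => exact IsAxiomVar.deriv_box_imp_box hA4 (.dist φ ψ)
  | a4 φ h => exact .ax (.a4 φ h)
  | a5 φ h => exact .ax (.a5 φ h)
  | kbel φ ψ h => exact .ax (.kbel φ ψ h)
  | core φ h => exact IsAxiomVar.deriv_box_imp_box hA4 (.core φ h)
  | intre φ h => exact .ax (.intre φ h)
  | e4 φ h => exact .ax (.e4 φ h)
  | e5 φ h => exact .ax (.e5 φ h)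
  | pnb φ h => exact .ax (.pnb φ h)
  | nnb φ h => exact .ax (.nnb φ h)

theorem stmt2_general (S : LogicSpec) (hA4 : S.hasA4) (φ : Fm) :
    Thm S φ ↔ Deriv (IsAxiomVar S) True ∅ φ :=
  ⟨.of_axioms (fun _ h => IsAxiom.deriv_isAxiomVar hA4 h)
      (fun _ h => (IsAxiomVar.deriv_box hA4 (IsAxiom.deriv_isAxiomVar hA4 h)).mono_tnd
        False.elim),
    .of_axioms (fun _ h => IsAxiomVar.deriv_isAxiom h)
      (fun _ h => (IsAxiom.deriv_box hA4 (IsAxiomVar.deriv_isAxiom h)).mono_tnd False.elim)⟩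

/-- Let `𝓛` be a logic of the hierarchy containing (A4).
Replacing (A3) by the distribution law and (CoRe) by `□φ→Kφ` yields a
deductively equivalent system: it proves exactly the same theorems. -/
theorem stmt2 (S : LogicSpec) (hS : InHierarchy S) (hA4 : S.hasA4) (φ : Fm) :
    Thm S φ ↔ Deriv (IsAxiomVar S) True ∅ φ :=
  stmt2_general S hA4 φ
end

section
/- For every formula φ, the formulas ◇□φ→□□φ, ◇¬□φ→□¬□φ and □(□φ∨¬□φ) are theorems of L5. -/
/-! By (TND) it suffices to treat the cases `□φ` and `¬□φ`, where (A4) gives `□□φ` and (A5)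
gives `□¬□φ`. Since `□` is monotone along axioms (AN, then (A3) and (A2)), these yield
`□(□φ ∨ ¬□φ)`, and `□□φ` yields `□¬¬□φ`, which refutes `◇¬□φ`; likewise `□¬□φ` refutes `◇□φ`. -/

namespace IPCThm

theorem imp_trans {φ ψ χ : Fm} (hφψ : IPCThm (φ.imp ψ)) (hψχ : IPCThm (ψ.imp χ)) :
    IPCThm (φ.imp χ) :=
  .mp (.mp (.ax (.k2 φ ψ χ)) (.mp (.ax (.k1 (ψ.imp χ) φ)) hψχ)) hφψ

theorem imp_self (φ : Fm) : IPCThm (φ.imp φ) :=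
  .mp (.mp (.ax (.k2 φ (φ.imp φ) φ)) (.ax (.k1 φ (φ.imp φ)))) (.ax (.k1 φ φ))

theorem imp_neg_neg (φ : Fm) : IPCThm (φ.imp φ.neg.neg) :=
  imp_trans (.ax (.k1 φ φ.neg)) (.mp (.ax (.k2 φ.neg φ .bot)) (imp_self φ.neg))

end IPCThm

namespace Derives

variable {S : LogicSpec} {Φ : Set Fm} {φ ψ χ : Fm}

theorem mp (hφψ : Derives S Φ (φ.imp ψ)) (hφ : Derives S Φ φ) : Derives S Φ ψ :=
  Deriv.mp hφψ hφ

theorem of_isAxiom (h : IsAxiom S φ) : Derives S Φ φ := Deriv.ax h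

theorem of_ipcThm (h : IPCThm φ) : Derives S Φ φ := of_isAxiom (.int h)

theorem of_mem (h : φ ∈ Φ) : Derives S Φ φ := Deriv.hyp h

theorem imp_intro (h : Derives S Φ ψ) : Derives S Φ (φ.imp ψ) :=
  (of_ipcThm (.ax (.k1 ψ φ))).mp h

theorem deduction (h : Derives S (insert φ Φ) ψ) : Derives S Φ (φ.imp ψ) := by
  unfold Derives at h
  induction h with
  | ax h => exact imp_intro (of_isAxiom h)
  | hyp h =>
    rcases Set.mem_insert_iff.mp h with rfl | h
    · exact of_ipcThm (IPCThm.imp_self _)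
    · exact imp_intro (of_mem h)
  | tnd χ h => exact imp_intro (Deriv.tnd χ h)
  | an h => exact imp_intro (Deriv.an h)
  | mp _ _ ihφψ ihφ => exact ((of_ipcThm (.ax (.k2 _ _ _))).mp ihφψ).mp ihφ

theorem by_cases (hpos : Derives S (insert φ Φ) χ) (hneg : Derives S (insert φ.neg Φ) χ) :
    Derives S Φ χ :=
  (((of_ipcThm (.ax (.orE φ φ.neg χ))).mp hpos.deduction).mp hneg.deduction).mp
    (Deriv.tnd φ trivial)

theorem absurd (h : Derives S Φ φ) (hn : Derives S Φ φ.neg) : Derives S Φ ψ :=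
  (of_ipcThm (.ax (.efq ψ))).mp (hn.mp h)

theorem box_mono (hφψ : IsAxiom S (φ.imp ψ)) (hφ : Derives S Φ φ.box) : Derives S Φ ψ.box :=
  ((of_isAxiom (.a2 _)).mp ((of_isAxiom (.a3 φ ψ)).mp (Deriv.an hφψ))).mp hφ

theorem box_box (h4 : S.hasA4) (h : Derives S Φ φ.box) : Derives S Φ φ.box.box :=
  (of_isAxiom (.a4 φ h4)).mp h

theorem box_neg_box (h5 : S.hasA5) (h : Derives S Φ φ.box.neg) : Derives S Φ φ.box.neg.box :=
  (of_isAxiom (.a5 φ h5)).mp h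

variable (h4 : S.hasA4) (h5 : S.hasA5)
include h4 h5

theorem diam_box_imp_box_box (φ : Fm) : Derives S Φ (φ.box.diam.imp φ.box.box) :=
  by_cases (φ := φ.box)
    (imp_intro (box_box h4 (of_mem (Set.mem_insert _ _))))
    (deduction (absurd (box_neg_box h5 (of_mem (by simp))) (of_mem (Set.mem_insert _ _))))

theorem diam_neg_box_imp_box_neg_box (φ : Fm) :
    Derives S Φ (φ.box.neg.diam.imp φ.box.neg.box) :=
  by_cases (φ := φ.box)
    (deduction (absurd (box_mono (.int (IPCThm.imp_neg_neg _))
      (box_box h4 (of_mem (by simp)))) (of_mem (Set.mem_insert _ _))))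
    (imp_intro (box_neg_box h5 (of_mem (Set.mem_insert _ _))))

theorem box_box_or_neg_box (φ : Fm) : Derives S Φ (φ.box.or φ.box.neg).box :=
  by_cases (φ := φ.box)
    (box_mono (.int (.ax (.orI1 _ _))) (box_box h4 (of_mem (Set.mem_insert _ _))))
    (box_mono (.int (.ax (.orI2 _ _))) (box_neg_box h5 (of_mem (Set.mem_insert _ _))))

end Derives

/-- For every formula `φ`, the formulas `◇□φ→□□φ`, `◇¬□φ→□¬□φ` and
`□(□φ∨¬□φ)` are theorems of `L5`. -/
theorem stmt5 (φ : Fm) :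
    Thm (Lspec 5) ((Fm.diam (Fm.box φ)).imp (Fm.box (Fm.box φ))) ∧
    Thm (Lspec 5) ((Fm.diam (Fm.neg (Fm.box φ))).imp (Fm.box (Fm.neg (Fm.box φ)))) ∧
    Thm (Lspec 5) (Fm.box ((Fm.box φ).or (Fm.neg (Fm.box φ)))) := by
  have h4 : (Lspec 5).hasA4 := show 4 ≤ 5 by norm_num
  have h5 : (Lspec 5).hasA5 := show 5 ≤ 5 by norm_num
  exact ⟨Derives.diam_box_imp_box_box h4 h5 φ, Derives.diam_neg_box_imp_box_neg_box h4 h5 φ,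
    Derives.box_box_or_neg_box h4 h5 φ⟩
end

section
/- For every formula φ, the formulas □φ→□K□φ are theorems of EL4⁻, and the formulas ¬□φ→□K¬□φ and K□φ ∨ K¬□φ are theorems of EL5⁻. -/
/-! (A4) makes `□φ` stable, `⊢ □φ → □□φ`, and (A5) makes `¬□φ` stable. (CoRe) followed by (A2)
turns every stable sentence into a known one, so (TND) for `□φ` gives `K□φ ∨ K¬□φ`. -/

namespace Deriv

variable {S : LogicSpec} {tnd : Prop} {Φ : Set Fm} {φ ψ χ : Fm}

lemma ipc (h : IPCAx φ) : Deriv (IsAxiom S) tnd Φ φ :=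
  ax (IsAxiom.int (IPCThm.ax h))

lemma imp_trans_s6 (h₁ : Deriv (IsAxiom S) tnd Φ (φ.imp ψ))
    (h₂ : Deriv (IsAxiom S) tnd Φ (ψ.imp χ)) : Deriv (IsAxiom S) tnd Φ (φ.imp χ) :=
  mp (mp (ipc (IPCAx.k2 φ ψ χ)) (mp (ipc (IPCAx.k1 (ψ.imp χ) φ)) h₂)) h₁

lemma or_elim (hφ : Deriv (IsAxiom S) tnd Φ (φ.imp χ)) (hψ : Deriv (IsAxiom S) tnd Φ (ψ.imp χ))
    (h : Deriv (IsAxiom S) tnd Φ (φ.or ψ)) : Deriv (IsAxiom S) tnd Φ χ :=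
  mp (mp (mp (ipc (IPCAx.orE φ ψ χ)) hφ) hψ) h

lemma imp_box_k_of_imp_box (hCoRe : S.hasCoRe) (h : Deriv (IsAxiom S) tnd Φ (φ.imp (Fm.box φ))) :
    Deriv (IsAxiom S) tnd Φ (φ.imp (Fm.box (Fm.k φ))) :=
  imp_trans_s6 h (ax (IsAxiom.core φ hCoRe))

lemma imp_k_of_imp_box (hCoRe : S.hasCoRe) (h : Deriv (IsAxiom S) tnd Φ (φ.imp (Fm.box φ))) :
    Deriv (IsAxiom S) tnd Φ (φ.imp (Fm.k φ)) :=
  imp_trans_s6 (imp_box_k_of_imp_box hCoRe h) (ax (IsAxiom.a2 (Fm.k φ)))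

lemma k_or_k_neg_of_imp_box (hCoRe : S.hasCoRe) (htnd : tnd)
    (hpos : Deriv (IsAxiom S) tnd Φ (φ.imp (Fm.box φ)))
    (hneg : Deriv (IsAxiom S) tnd Φ (φ.neg.imp (Fm.box φ.neg))) :
    Deriv (IsAxiom S) tnd Φ ((Fm.k φ).or (Fm.k φ.neg)) :=
  or_elim (imp_trans_s6 (imp_k_of_imp_box hCoRe hpos) (ipc (IPCAx.orI1 _ _)))
    (imp_trans_s6 (imp_k_of_imp_box hCoRe hneg) (ipc (IPCAx.orI2 _ _))) (Deriv.tnd φ htnd)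

end Deriv

/-- For every formula `φ`, `□φ→□K□φ` is a theorem of `EL4⁻`, and
`¬□φ→□K¬□φ` and `K□φ ∨ K¬□φ` are theorems of `EL5⁻`. -/
theorem stmt6 (φ : Fm) :
    Thm (ELmSpec 4) ((Fm.box φ).imp (Fm.box (Fm.k (Fm.box φ)))) ∧
    Thm (ELmSpec 5) ((Fm.neg (Fm.box φ)).imp (Fm.box (Fm.k (Fm.neg (Fm.box φ))))) ∧
    Thm (ELmSpec 5) ((Fm.k (Fm.box φ)).or (Fm.k (Fm.neg (Fm.box φ)))) := by
  have a4 {n : Nat} (hn : 4 ≤ n) : Thm (ELmSpec n) ((Fm.box φ).imp (Fm.box (Fm.box φ))) :=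
    Deriv.ax (IsAxiom.a4 φ hn)
  have a5 : Thm (ELmSpec 5) ((Fm.box φ).neg.imp (Fm.box (Fm.box φ).neg)) :=
    Deriv.ax (IsAxiom.a5 φ le_rfl)
  exact ⟨Deriv.imp_box_k_of_imp_box trivial (a4 le_rfl),
    Deriv.imp_box_k_of_imp_box trivial a5,
    Deriv.k_or_k_neg_of_imp_box trivial trivial (a4 (by norm_num)) a5⟩
end

section
/- Let H be a Heyting algebra, let m₁, m₂ ∈ H, and let P be a prime filter of H. Then the Heyting implication m₁ ⇨ m₂ belongs to P if and only if for every prime filter P' of H with P ⊆ P', m₁ ∈ P' implies m₂ ∈ P'. -/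
/-!
If `m₁ ⇨ m₂ ∉ P`, then `{x | m₁ ⇨ x ∈ P}` is a filter containing `P` and `m₁` but not `m₂`;
it is the filter generated by `P` and `m₁`. The prime ideal theorem for distributive lattices
separates it from the principal ideal of `m₂` by a prime ideal, whose complement is the required
prime filter.
-/

/-- A filter of a Heyting algebra: a nonempty, upward-closed subset closed under meets. -/
def IsHFilter {H : Type*} [HeytingAlgebra H] (F : Set H) : Prop :=
  F.Nonempty ∧ (∀ ⦃a b : H⦄, a ∈ F → a ≤ b → b ∈ F) ∧
    (∀ ⦃a b : H⦄, a ∈ F → b ∈ F → a ⊓ b ∈ F)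

/-- A proper filter: a filter which is not the whole algebra. -/
def IsProperHFilter {H : Type*} [HeytingAlgebra H] (F : Set H) : Prop :=
  IsHFilter F ∧ F ≠ Set.univ

/-- A prime filter: a proper filter such that `a ⊔ b ∈ F` implies `a ∈ F` or `b ∈ F`. -/
def IsPrimeHFilter {H : Type*} [HeytingAlgebra H] (F : Set H) : Prop :=
  IsProperHFilter F ∧ ∀ a b : H, a ⊔ b ∈ F → a ∈ F ∨ b ∈ F

/-- An ultrafilter: a maximal proper filter. -/
def IsUltraHFilter {H : Type*} [HeytingAlgebra H] (F : Set H) : Prop :=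
  IsProperHFilter F ∧ ∀ G : Set H, IsProperHFilter G → F ⊆ G → G = F

section

open Order

variable {H : Type*} [HeytingAlgebra H]

namespace IsHFilter

variable {F : Set H}

theorem top_mem (hF : IsHFilter F) : ⊤ ∈ F :=
  hF.1.elim fun _ hx => hF.2.1 hx le_top

theorem mem_of_himp_mem {a b : H} (hF : IsHFilter F) (hab : a ⇨ b ∈ F) (ha : a ∈ F) : b ∈ F :=
  hF.2.1 (hF.2.2 hab ha) himp_inf_le

theorem isPFilter_himp_preimage (hF : IsHFilter F) (a : H) : IsPFilter {x | a ⇨ x ∈ F} := by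
  refine .of_def ⟨⊤, by simpa using hF.top_mem⟩ ?_ ?_
  · intro x hx y hy
    exact ⟨x ⊓ y, by simpa [himp_inf_distrib] using hF.2.2 hx hy, inf_le_left, inf_le_right⟩
  · intro x y hxy hx
    exact hF.2.1 hx (himp_le_himp_left hxy)

end IsHFilter

theorem Order.Ideal.IsPrime.isPrimeHFilter_compl {J : Ideal H} (hJ : J.IsPrime) :
    IsPrimeHFilter (J : Set H)ᶜ := by
  let F := hJ.compl_filter.toPFilter
  refine ⟨⟨⟨F.nonempty, fun _ _ hx hxy => F.mem_of_le hxy hx, fun _ _ hx hy => F.inf_mem hx hy⟩,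
    ?_⟩, ?_⟩
  · exact Set.compl_ne_univ.mpr J.nonempty
  · exact fun a b hab => not_and_or.mp fun ⟨ha, hb⟩ => hab (J.sup_mem ha hb)

theorem IsHFilter.exists_isPrimeHFilter_of_himp_notMem {P : Set H} (hP : IsHFilter P) {a b : H}
    (hab : a ⇨ b ∉ P) : ∃ P', IsPrimeHFilter P' ∧ P ⊆ P' ∧ a ∈ P' ∧ b ∉ P' := by
  let F := (hP.isPFilter_himp_preimage a).toPFilter
  have hdisj : Disjoint (F : Set H) (Ideal.principal b : Set H) :=
    Set.disjoint_left.mpr fun x hx hxb => hab (hP.2.1 hx (himp_le_himp_left hxb))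
  obtain ⟨J, hJ, hbJ, hFJ⟩ := DistribLattice.prime_ideal_of_disjoint_filter_ideal hdisj
  refine ⟨(J : Set H)ᶜ, hJ.isPrimeHFilter_compl, fun p hp => ?_, ?_, ?_⟩
  · exact hFJ.subset_compl_right (show a ⇨ p ∈ P from hP.2.1 hp le_himp)
  · exact hFJ.subset_compl_right (show a ⇨ a ∈ P by simpa using hP.top_mem)
  · exact not_not.mpr (hbJ (Ideal.mem_principal.mpr le_rfl))

end

/-- Let `H` be a Heyting algebra, `m₁ m₂ ∈ H` and `P` a prime
filter of `H`.  Then `m₁ ⇨ m₂ ∈ P` iff for every prime filter `P' ⊇ P`,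
`m₁ ∈ P'` implies `m₂ ∈ P'`. -/
theorem stmt8 {H : Type*} [HeytingAlgebra H] (m₁ m₂ : H) (P : Set H)
    (hP : IsPrimeHFilter P) :
    (m₁ ⇨ m₂) ∈ P ↔
      ∀ P' : Set H, IsPrimeHFilter P' → P ⊆ P' → m₁ ∈ P' → m₂ ∈ P' := by
  refine ⟨fun h P' hP' hPP' hm₁ => hP'.1.1.mem_of_himp_mem (hPP' h) hm₁, fun h => ?_⟩
  by_contra hm
  obtain ⟨P', hP', hPP', hm₁, hm₂⟩ := hP.1.1.exists_isPrimeHFilter_of_himp_notMem hm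
  exact hm₂ (h P' hP' hPP' hm₁)
end

section
/- Let M be an EL3⁻-model (or any model of the hierarchy). Then the set BEL := {m ∈ M | f_K(m) ∈ TRUE} of believed propositions is a filter of the underlying Heyting algebra. If moreover M is a model of knowledge, i.e. f_K(m) ≤ ¬¬m for all m ∈ M, then BEL ⊆ TRUE and BEL is a proper filter. -/
/-- The raw data of an algebraic model: a Heyting algebra together with a
designated set `TRUE` and unary operations `fbox` (for `□`) and `fK` (for `K`). -/
structure PreModel (M : Type*) [HeytingAlgebra M] where
  TRUE : Set M
  fbox : M → M
  fK : M → M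

/-- An `EL3⁻`-model: `TRUE` is an ultrafilter and the truth conditions (i)–(vi) hold. -/
def IsEL3mModel {M : Type*} [HeytingAlgebra M] (S : PreModel M) : Prop :=
  IsUltraHFilter S.TRUE ∧
  (∀ m m' : M, S.fbox (m ⊔ m') ≤ S.fbox m ⊔ S.fbox m') ∧
  (∀ m : M, S.fbox m ≤ m) ∧
  (∀ m m' : M, S.fbox (m ⇨ m') ≤ S.fbox (S.fbox m ⇨ S.fbox m')) ∧
  (∀ m : M, S.fbox m ∈ S.TRUE ↔ m = ⊤) ∧
  (∀ m m' : M, S.fK (m ⇨ m') ≤ S.fK m ⇨ S.fK m') ∧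
  (∀ m : M, S.fbox m ≤ S.fbox (S.fK m))

/-- An `EL5⁻`-model: an `EL3⁻`-model where `fbox ⊤ = ⊤` and `fbox m = ⊥` for `m ≠ ⊤`. -/
def IsEL5mModel {M : Type*} [HeytingAlgebra M] (S : PreModel M) : Prop :=
  IsEL3mModel S ∧ S.fbox ⊤ = ⊤ ∧ ∀ m : M, m ≠ ⊤ → S.fbox m = ⊥

/-- An `EL5`-model: an `EL5⁻`-model which additionally satisfies `fK m ≤ ¬¬m`. -/
def IsEL5Model {M : Type*} [HeytingAlgebra M] (S : PreModel M) : Prop :=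
  IsEL5mModel S ∧ ∀ m : M, S.fK m ≤ (m ⇨ ⊥) ⇨ ⊥


/-!
`BEL` is closed under modus ponens because `f_K` distributes over `⇨` up to `≤` (axiom (v))
and sends every tautology into `TRUE` (axioms (ii), (iv), (vi)); filterhood follows from the
tautologies `a ⇨ b` for `a ≤ b` and `a ⇨ b ⇨ a ⊓ b`. Under `f_K m ≤ ¬¬m`, a believed `m` has
`¬¬m ∈ TRUE`, and an ultrafilter contains `¬m` whenever it misses `m` (maximality forces
`t ⊓ m ≤ ⊥` for some `t ∈ TRUE`), so `m ∈ TRUE`.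
-/

section HeytingFilter

variable {H : Type*} [HeytingAlgebra H] {F G : Set H} {a b m : H}

theorem IsHFilter.top_mem_s9 (hF : IsHFilter F) : ⊤ ∈ F :=
  let ⟨_, ha⟩ := hF.1
  hF.2.1 ha le_top

theorem IsHFilter.mem_of_himp_mem_s9 (hF : IsHFilter F) (ha : a ∈ F) (hab : a ⇨ b ∈ F) : b ∈ F :=
  hF.2.1 (hF.2.2 ha hab) inf_himp_le

theorem IsProperHFilter.bot_notMem (hF : IsProperHFilter F) : ⊥ ∉ F := fun hbot =>
  hF.2 (Set.eq_univ_of_forall fun _ => hF.1.2.1 hbot bot_le)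

theorem IsProperHFilter.of_subset (hG : IsHFilter G) (hF : IsProperHFilter F) (hGF : G ⊆ F) :
    IsProperHFilter G :=
  ⟨hG, fun hGuniv => hF.2 (Set.eq_univ_of_univ_subset (hGuniv ▸ hGF))⟩

/-- The filter generated by `F ∪ {m}`, when `F` is a filter. -/
def hFilterAdjoin (F : Set H) (m : H) : Set H :=
  {x | ∃ t ∈ F, t ⊓ m ≤ x}

theorem IsHFilter.isHFilter_hFilterAdjoin (hF : IsHFilter F) (m : H) :
    IsHFilter (hFilterAdjoin F m) := by
  refine ⟨⟨⊤, ⊤, hF.top_mem_s9, le_top⟩, ?_, ?_⟩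
  · rintro a b ⟨t, ht, hta⟩ hab
    exact ⟨t, ht, hta.trans hab⟩
  · rintro a b ⟨t, ht, hta⟩ ⟨t', ht', htb⟩
    refine ⟨t ⊓ t', hF.2.2 ht ht', le_inf ?_ ?_⟩
    · exact (inf_le_inf_right m inf_le_left).trans hta
    · exact (inf_le_inf_right m inf_le_right).trans htb

theorem subset_hFilterAdjoin (F : Set H) (m : H) : F ⊆ hFilterAdjoin F m :=
  fun t ht => ⟨t, ht, inf_le_left⟩

theorem IsHFilter.mem_hFilterAdjoin_self (hF : IsHFilter F) (m : H) : m ∈ hFilterAdjoin F m :=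
  ⟨⊤, hF.top_mem_s9, inf_le_right⟩

theorem IsUltraHFilter.himp_bot_mem_of_notMem (hF : IsUltraHFilter F) (hm : m ∉ F) :
    m ⇨ ⊥ ∈ F := by
  have hG := hF.1.1.isHFilter_hFilterAdjoin m
  have hGuniv : hFilterAdjoin F m = Set.univ := by
    by_contra hne
    have hGF := hF.2 _ ⟨hG, hne⟩ (subset_hFilterAdjoin F m)
    exact hm (hGF ▸ hF.1.1.mem_hFilterAdjoin_self m)
  obtain ⟨t, ht, htm⟩ : ⊥ ∈ hFilterAdjoin F m := hGuniv ▸ Set.mem_univ _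
  exact hF.1.1.2.1 ht (le_himp_iff.mpr htm)

theorem IsUltraHFilter.mem_of_himp_bot_himp_bot_mem (hF : IsUltraHFilter F)
    (hm : (m ⇨ ⊥) ⇨ ⊥ ∈ F) : m ∈ F := by
  by_contra hmF
  exact hF.1.bot_notMem (hF.1.1.mem_of_himp_mem_s9 (hF.himp_bot_mem_of_notMem hmF) hm)

end HeytingFilter

def PreModel.BEL {M : Type*} [HeytingAlgebra M] (S : PreModel M) : Set M :=
  {m | S.fK m ∈ S.TRUE}

namespace IsEL3mModel

variable {M : Type*} [HeytingAlgebra M] {S : PreModel M} {a b : M}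

theorem isHFilter_TRUE (h : IsEL3mModel S) : IsHFilter S.TRUE :=
  h.1.1.1

theorem mem_BEL_of_eq_top (h : IsEL3mModel S) (ha : a = ⊤) : a ∈ S.BEL :=
  h.isHFilter_TRUE.2.1 ((h.2.2.2.2.1 a).mpr ha) ((h.2.2.2.2.2.2 a).trans (h.2.2.1 _))

theorem mem_BEL_of_himp_mem (h : IsEL3mModel S) (ha : a ∈ S.BEL) (hab : a ⇨ b ∈ S.BEL) :
    b ∈ S.BEL :=
  h.isHFilter_TRUE.mem_of_himp_mem_s9 ha (h.isHFilter_TRUE.2.1 hab (h.2.2.2.2.2.1 a b))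

theorem isHFilter_BEL (h : IsEL3mModel S) : IsHFilter S.BEL := by
  refine ⟨⟨⊤, h.mem_BEL_of_eq_top rfl⟩, fun a b ha hab => ?_, fun a b ha hb => ?_⟩
  · exact h.mem_BEL_of_himp_mem ha (h.mem_BEL_of_eq_top (himp_eq_top_iff.mpr hab))
  · have hab : a ⇨ b ⇨ a ⊓ b ∈ S.BEL :=
      h.mem_BEL_of_eq_top (himp_eq_top_iff.mpr (le_himp_iff.mpr le_rfl))
    exact h.mem_BEL_of_himp_mem hb (h.mem_BEL_of_himp_mem ha hab)

theorem BEL_subset_TRUE (h : IsEL3mModel S) (hK : ∀ m : M, S.fK m ≤ (m ⇨ ⊥) ⇨ ⊥) :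
    S.BEL ⊆ S.TRUE := fun m hm =>
  h.1.mem_of_himp_bot_himp_bot_mem (h.isHFilter_TRUE.2.1 hm (hK m))

end IsEL3mModel

/-- In any `EL3⁻`-model, the set `BEL = {m | f_K(m) ∈ TRUE}` of
believed propositions is a filter of the underlying Heyting algebra; if the
model is a model of knowledge (i.e. `f_K(m) ≤ ¬¬m` for all `m`), then
`BEL ⊆ TRUE` and `BEL` is a proper filter. -/
theorem stmt9 {M : Type*} [HeytingAlgebra M] (S : PreModel M) (h : IsEL3mModel S) :
    IsHFilter {m : M | S.fK m ∈ S.TRUE} ∧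
    ((∀ m : M, S.fK m ≤ (m ⇨ ⊥) ⇨ ⊥) →
      {m : M | S.fK m ∈ S.TRUE} ⊆ S.TRUE ∧
      IsProperHFilter {m : M | S.fK m ∈ S.TRUE}) :=
  ⟨h.isHFilter_BEL, fun hK =>
    ⟨h.BEL_subset_TRUE hK, .of_subset h.isHFilter_BEL h.1.1 (h.BEL_subset_TRUE hK)⟩⟩
end

section
/- Every E6L5⁻-frame is an E5L5⁻-frame; that is, if E is constant (E(w) = E(w_⊥) for all w ∈ W), then the frame satisfies both the E4L5⁻-condition (A ∈ E(w) implies KA ∈ E(w)) and the E5L5⁻-condition (if A ∉ E(w') for all w' ≥ w, then (KA ⊃ ∅) ∈ E(w)). -/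
/-- The raw data of an intuitionistic general frame: worlds, an accessibility
relation, a set `P` of propositions, a belief function `E` and a bottom world. -/
structure Frame (W : Type*) where
  R : W → W → Prop
  P : Set (Set W)
  E : W → Set (Set W)
  wbot : W

/-- The operation `A ⊃ B` on propositions. -/
def Frame.himp {W : Type*} (F : Frame W) (A B : Set W) : Set W :=
  {w | ∀ w', F.R w w' → w' ∈ A → w' ∈ B}

/-- The operation `KA = {w | A ∈ E(w)}` on propositions. -/
def Frame.kset {W : Type*} (F : Frame W) (A : Set W) : Set W :=
  {w | A ∈ F.E w}

/-- `w` is an `R`-maximal world. -/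
def Frame.IsMaxW {W : Type*} (F : Frame W) (w : W) : Prop :=
  ∀ w', F.R w w' → w' = w

/-- The basic frame conditions (of an `EL5⁻`-frame, except for the designated
maximal world): `R` is a partial order with least element `wbot` in which every
`R`-chain has an upper bound; `P` consists of upper sets, contains `∅` and `W`
and is closed under `∩`, `∪`, `⊃` and `K`; each `E(w)` is a filter on `P`; and
`E` is monotone. -/
def IsBaseFrame {W : Type*} (F : Frame W) : Prop :=
  (∀ w, F.R w w) ∧
  (∀ ⦃w w' w''⦄, F.R w w' → F.R w' w'' → F.R w w'') ∧
  (∀ ⦃w w'⦄, F.R w w' → F.R w' w → w = w') ∧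
  (∀ w, F.R F.wbot w) ∧
  (∀ C : Set W, IsChain F.R C → ∃ ub, ∀ w ∈ C, F.R w ub) ∧
  (∀ A ∈ F.P, ∀ ⦃w w'⦄, F.R w w' → w ∈ A → w' ∈ A) ∧
  (∅ : Set W) ∈ F.P ∧
  (Set.univ : Set W) ∈ F.P ∧
  (∀ A ∈ F.P, ∀ B ∈ F.P, A ∩ B ∈ F.P) ∧
  (∀ A ∈ F.P, ∀ B ∈ F.P, A ∪ B ∈ F.P) ∧
  (∀ A ∈ F.P, ∀ B ∈ F.P, F.himp A B ∈ F.P) ∧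
  (∀ A ∈ F.P, F.kset A ∈ F.P) ∧
  (∀ w, F.E w ⊆ F.P) ∧
  (∀ w, (F.E w).Nonempty) ∧
  (∀ w, ∀ A ∈ F.E w, ∀ B ∈ F.E w, A ∩ B ∈ F.E w) ∧
  (∀ w, ∀ A ∈ F.E w, ∀ B ∈ F.P, A ⊆ B → B ∈ F.E w) ∧
  (∀ ⦃w w'⦄, F.R w w' → F.E w ⊆ F.E w')

/-- The `E4L5⁻`-frame condition: `A ∈ E(w)` implies `KA ∈ E(w)`. -/
def E4Cond {W : Type*} (F : Frame W) : Prop :=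
  ∀ w, ∀ A ∈ F.P, A ∈ F.E w → F.kset A ∈ F.E w

/-- The `E5L5⁻`-frame condition: if `A ∉ E(w')` for all `w' ≥ w`,
then `(KA ⊃ ∅) ∈ E(w)`. -/
def E5Cond {W : Type*} (F : Frame W) : Prop :=
  ∀ w, ∀ A ∈ F.P, (∀ w', F.R w w' → A ∉ F.E w') → F.himp (F.kset A) ∅ ∈ F.E w

/-- The `E6L5⁻`-frame condition: `E` is constant, i.e. `E(w) = E(wbot)` for all `w`. -/
def E6Cond {W : Type*} (F : Frame W) : Prop :=
  ∀ w, F.E w = F.E F.wbot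

/-- The knowledge condition of `EkL5`-frames: every believed proposition
contains all accessible maximal worlds. -/
def KnowCond {W : Type*} (F : Frame W) : Prop :=
  ∀ w, ∀ A ∈ F.E w, ∀ w', F.R w w' → F.IsMaxW w' → w' ∈ A

/-- The condition (IntCo) of intuitionistic co-reflection: `w ∈ A` implies `A ∈ E(w)`. -/
def IntCoCond {W : Type*} (F : Frame W) : Prop :=
  ∀ w, ∀ A ∈ F.P, w ∈ A → A ∈ F.E w

/-- An `IEL⁻`-frame: the basic frame conditions (no designated maximal world)
together with (IntCo). -/
def IsIELmFrame {W : Type*} (F : Frame W) : Prop := IsBaseFrame F ∧ IntCoCond F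

/-- An `IEL`-frame: an `IEL⁻`-frame in which every believed proposition contains
all accessible maximal worlds. -/
def IsIELFrame {W : Type*} (F : Frame W) : Prop := IsIELmFrame F ∧ KnowCond F

/-- A frame with a designated world `wT`. -/
structure EFrame (W : Type*) extends Frame W where
  wT : W

/-- An `EL5⁻`-frame: the basic frame conditions together with maximality of the
designated world `wT`. -/
def IsEL5mFrame {W : Type*} (F : EFrame W) : Prop :=
  IsBaseFrame F.toFrame ∧ F.toFrame.IsMaxW F.wT

/-! When `E` is constant, `KA` is all of `W` or empty according as `A ∈ E(w_⊥)` or not. So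
whenever the hypothesis of `E4` or `E5` holds, the proposition required to be believed is `W`,
which lies in every filter `E(w)`. -/

namespace E6Cond

variable {W : Type*} {F : Frame W}

theorem E_eq (h6 : E6Cond F) (w w' : W) : F.E w = F.E w' :=
  (h6 w).trans (h6 w').symm

theorem kset_eq_univ (h6 : E6Cond F) {A : Set W} {w : W} (hA : A ∈ F.E w) :
    F.kset A = Set.univ :=
  Set.eq_univ_of_forall fun v => show A ∈ F.E v from h6.E_eq w v ▸ hA

theorem kset_eq_empty (h6 : E6Cond F) {A : Set W} {w : W} (hA : A ∉ F.E w) :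
    F.kset A = ∅ :=
  Set.eq_empty_of_forall_notMem fun v hv => hA (h6.E_eq v w ▸ hv)

end E6Cond

theorem Frame.himp_empty_left {W : Type*} (F : Frame W) (B : Set W) :
    F.himp ∅ B = Set.univ :=
  Set.eq_univ_of_forall fun _ _ _ h => absurd h (Set.notMem_empty _)

namespace IsBaseFrame

variable {W : Type*} {F : Frame W}

theorem univ_mem_E (hB : IsBaseFrame F) (w : W) : Set.univ ∈ F.E w := by
  obtain ⟨-, -, -, -, -, -, -, huniv, -, -, -, -, -, hEne, -, hEup, -⟩ := hB
  obtain ⟨A, hA⟩ := hEne w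
  exact hEup w A hA Set.univ huniv (Set.subset_univ A)

theorem e4Cond_of_e6Cond (hB : IsBaseFrame F) (h6 : E6Cond F) : E4Cond F := by
  intro w A _ hA
  rw [h6.kset_eq_univ hA]
  exact hB.univ_mem_E w

theorem e5Cond_of_e6Cond (hB : IsBaseFrame F) (h6 : E6Cond F) : E5Cond F := by
  intro w A _ hnot
  rw [h6.kset_eq_empty (hnot w (hB.1 w)), Frame.himp_empty_left]
  exact hB.univ_mem_E w

end IsBaseFrame

/-- Every `E6L5⁻`-frame is an `E5L5⁻`-frame: if `E` is constant
(`E(w) = E(w_⊥)` for all `w`), then the frame satisfies both the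
`E4L5⁻`-condition and the `E5L5⁻`-condition. -/
theorem stmt13 {W : Type*} (F : EFrame W) (hF : IsEL5mFrame F)
    (h6 : E6Cond F.toFrame) :
    E4Cond F.toFrame ∧ E5Cond F.toFrame :=
  ⟨hF.1.e4Cond_of_e6Cond h6, hF.1.e5Cond_of_e6Cond h6⟩
end

section
/- Soundness with respect to relational semantics: let 𝓛 be one of the logics EL5⁻, EL5, EkL5⁻ or EkL5 (k ∈ {4,5,6}). For every set of formulas Φ ∪ {φ} ⊆ Fm, if Φ ⊢_𝓛 φ, then every relational model based on an 𝓛-frame satisfying Φ also satisfies φ. -/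
/-- Interpretation of formulas in a frame under an assignment `g`:
`interpFm F g φ` is the set `φ* = {w | w ⊨ φ}`. -/
def interpFm {W : Type*} (F : Frame W) (g : Nat → Set W) : Fm → Set W
  | .var n => g n
  | .bot => ∅
  | .and φ ψ => interpFm F g φ ∩ interpFm F g ψ
  | .or φ ψ => interpFm F g φ ∪ interpFm F g ψ
  | .imp φ ψ => F.himp (interpFm F g φ) (interpFm F g ψ)
  | .box φ => {_w | F.wbot ∈ interpFm F g φ}
  | .k φ => {w | interpFm F g φ ∈ F.E w}

/-- Frames for the S5-style logic specified by `S` (one of `EL5⁻`, `EL5`,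
`EkL5⁻`, `EkL5` for k ∈ {4,5,6}). -/
def IsFrameFor (S : LogicSpec) {W : Type*} (F : EFrame W) : Prop :=
  IsEL5mFrame F ∧
  (S.hasE4 → E4Cond F.toFrame) ∧
  (S.hasE5 → E5Cond F.toFrame) ∧
  (S.hasPNB ∧ S.hasNNB → E6Cond F.toFrame) ∧
  (S.hasIntRe → KnowCond F.toFrame)

/-!
Each axiom of `𝓛` holds at every world of every model on an `𝓛`-frame, and so does `□` of it,
since `□` only looks at the least world; (MP) preserves truth at any world. The theorem scheme
(TND) is where the designated world is needed: at an `R`-maximal world `w` the clause for `¬φ`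
only inspects `w` itself, so `w ⊨ φ ∨ ¬φ`. Zorn's lemma provides maximal worlds above any world,
which validates (IntRe) on frames whose beliefs contain all accessible maximal worlds.
-/

namespace IsBaseFrame

variable {W : Type*} {F : Frame W}

theorem refl (hF : IsBaseFrame F) (w : W) : F.R w w := hF.1 w

theorem trans (hF : IsBaseFrame F) {w w' w'' : W} (h : F.R w w') (h' : F.R w' w'') :
    F.R w w'' := hF.2.1 h h'

theorem antisymm (hF : IsBaseFrame F) {w w' : W} (h : F.R w w') (h' : F.R w' w) : w = w' :=
  hF.2.2.1 h h'

theorem wbot_le (hF : IsBaseFrame F) (w : W) : F.R F.wbot w := hF.2.2.2.1 w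

theorem chain_bounded (hF : IsBaseFrame F) (C : Set W) (hC : IsChain F.R C) :
    ∃ ub, ∀ w ∈ C, F.R w ub := hF.2.2.2.2.1 C hC

theorem mem_of_le (hF : IsBaseFrame F) {A : Set W} (hA : A ∈ F.P) {w w' : W} (h : F.R w w')
    (hw : w ∈ A) : w' ∈ A := hF.2.2.2.2.2.1 A hA h hw

theorem empty_mem (hF : IsBaseFrame F) : (∅ : Set W) ∈ F.P := hF.2.2.2.2.2.2.1

theorem univ_mem (hF : IsBaseFrame F) : (Set.univ : Set W) ∈ F.P := hF.2.2.2.2.2.2.2.1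

theorem inter_mem (hF : IsBaseFrame F) {A B : Set W} (hA : A ∈ F.P) (hB : B ∈ F.P) :
    A ∩ B ∈ F.P := hF.2.2.2.2.2.2.2.2.1 A hA B hB

theorem union_mem (hF : IsBaseFrame F) {A B : Set W} (hA : A ∈ F.P) (hB : B ∈ F.P) :
    A ∪ B ∈ F.P := hF.2.2.2.2.2.2.2.2.2.1 A hA B hB

theorem himp_mem (hF : IsBaseFrame F) {A B : Set W} (hA : A ∈ F.P) (hB : B ∈ F.P) :
    F.himp A B ∈ F.P := hF.2.2.2.2.2.2.2.2.2.2.1 A hA B hB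

theorem kset_mem (hF : IsBaseFrame F) {A : Set W} (hA : A ∈ F.P) : F.kset A ∈ F.P :=
  hF.2.2.2.2.2.2.2.2.2.2.2.1 A hA

theorem E_nonempty (hF : IsBaseFrame F) (w : W) : (F.E w).Nonempty :=
  hF.2.2.2.2.2.2.2.2.2.2.2.2.2.1 w

theorem inter_mem_E (hF : IsBaseFrame F) {w : W} {A B : Set W} (hA : A ∈ F.E w)
    (hB : B ∈ F.E w) : A ∩ B ∈ F.E w := hF.2.2.2.2.2.2.2.2.2.2.2.2.2.2.1 w A hA B hB

theorem mem_E_of_subset (hF : IsBaseFrame F) {w : W} {A B : Set W} (hA : A ∈ F.E w)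
    (hB : B ∈ F.P) (hAB : A ⊆ B) : B ∈ F.E w := hF.2.2.2.2.2.2.2.2.2.2.2.2.2.2.2.1 w A hA B hB hAB

theorem E_mono (hF : IsBaseFrame F) {w w' : W} (h : F.R w w') : F.E w ⊆ F.E w' :=
  hF.2.2.2.2.2.2.2.2.2.2.2.2.2.2.2.2 h

theorem mem_E_of_forall_mem (hF : IsBaseFrame F) (w : W) {A : Set W} (hA : A ∈ F.P)
    (hall : ∀ x, x ∈ A) : A ∈ F.E w :=
  let ⟨_, hB⟩ := hF.E_nonempty w
  hF.mem_E_of_subset hB hA fun x _ => hall x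

theorem exists_le_isMaxW (hF : IsBaseFrame F) (w : W) : ∃ m, F.R w m ∧ F.IsMaxW m := by
  let _ : PartialOrder W :=
    { le := F.R, le_refl := hF.refl, le_trans := fun _ _ _ => hF.trans,
      le_antisymm := fun _ _ => hF.antisymm }
  obtain ⟨m, hwm, hm⟩ := zorn_le_nonempty_Ici₀ w
    (fun C _ hC _ _ => hF.chain_bounded C hC) w (le_refl w)
  exact ⟨m, hwm, fun w' hmw' => hm.eq_of_ge hmw'⟩

end IsBaseFrame

section Soundness

variable {W : Type*} {F : Frame W} {g : Nat → Set W}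

theorem interpFm_mem_P (hF : IsBaseFrame F) (hg : ∀ n, g n ∈ F.P) (φ : Fm) :
    interpFm F g φ ∈ F.P := by
  induction φ with
  | var n => exact hg n
  | bot => exact hF.empty_mem
  | and φ ψ ihφ ihψ => exact hF.inter_mem ihφ ihψ
  | or φ ψ ihφ ihψ => exact hF.union_mem ihφ ihψ
  | imp φ ψ ihφ ihψ => exact hF.himp_mem ihφ ihψ
  | box φ _ =>
    by_cases h : F.wbot ∈ interpFm F g φ
    · simpa [interpFm, h] using hF.univ_mem
    · simpa [interpFm, h] using hF.empty_mem
  | k φ ihφ => exact hF.kset_mem ihφ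

theorem mem_interpFm_of_le (hF : IsBaseFrame F) (hg : ∀ n, g n ∈ F.P) {φ : Fm} {w w' : W}
    (h : F.R w w') (hw : w ∈ interpFm F g φ) : w' ∈ interpFm F g φ :=
  hF.mem_of_le (interpFm_mem_P hF hg φ) h hw

theorem IPCAx.mem_interpFm (hF : IsBaseFrame F) (hg : ∀ n, g n ∈ F.P) {φ : Fm} (h : IPCAx φ)
    (w : W) : w ∈ interpFm F g φ := by
  have mono := fun {φ w w'} => mem_interpFm_of_le (φ := φ) (w := w) (w' := w') hF hg
  cases h with
  | k1 => exact fun _ _ hφ _ h hψ => mono h hφ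
  | k2 =>
    exact fun _ _ hφψχ _ h hφψ _ h' hφ =>
      hφψχ _ (hF.trans h h') hφ _ (hF.refl _) (hφψ _ h' hφ)
  | andI => exact fun _ _ hφ _ h hψ => ⟨mono h hφ, hψ⟩
  | andE1 => exact fun _ _ h => h.1
  | andE2 => exact fun _ _ h => h.2
  | orI1 => exact fun _ _ => Or.inl
  | orI2 => exact fun _ _ => Or.inr
  | orE =>
    exact fun _ _ hφχ _ h hψχ _ h' hφψ =>
      hφψ.elim (hφχ _ (hF.trans h h')) (hψχ _ h')
  | efq => exact fun _ _ h => h.elim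

theorem IPCThm.mem_interpFm (hF : IsBaseFrame F) (hg : ∀ n, g n ∈ F.P) {φ : Fm} (h : IPCThm φ)
    (w : W) : w ∈ interpFm F g φ := by
  induction h generalizing w with
  | ax h => exact h.mem_interpFm hF hg w
  | mp _ _ ihφψ ihφ => exact ihφψ w w (hF.refl w) (ihφ w)

theorem IsAxiom.mem_interpFm {S : LogicSpec} (hF : IsBaseFrame F) (hg : ∀ n, g n ∈ F.P)
    (h4 : S.hasE4 → E4Cond F) (h5 : S.hasE5 → E5Cond F)
    (h6p : S.hasPNB → E6Cond F) (h6n : S.hasNNB → E6Cond F)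
    (hkn : S.hasIntRe → KnowCond F) {φ : Fm} (h : IsAxiom S φ) (w : W) :
    w ∈ interpFm F g φ := by
  have memP := interpFm_mem_P hF hg
  cases h with
  | int h => exact h.mem_interpFm hF hg w
  | a1 => exact fun _ _ h => h
  | a2 => exact fun w' _ h => mem_interpFm_of_le hF hg (hF.wbot_le w') h
  | a3 => exact fun _ _ h _ _ hφ => h _ (hF.refl _) hφ
  | a4 => exact fun _ _ h => h
  | a5 => exact fun w' _ h _ _ hφ => h w' (hF.refl w') hφ
  | kbel φ ψ =>
    refine fun _ _ hφψ w' h hφ => hF.mem_E_of_subset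
      (hF.inter_mem_E (hF.E_mono h hφψ) hφ) (memP ψ) ?_
    exact fun x ⟨hφψ, hφ⟩ => hφψ x (hF.refl x) hφ
  | core φ =>
    exact fun _ _ hφ => hF.mem_E_of_forall_mem _ (memP φ)
      fun x => mem_interpFm_of_le hF hg (hF.wbot_le x) hφ
  | intre φ hIntRe =>
    intro w' _ hφ w'' h hnφ
    obtain ⟨m, hm, hmax⟩ := hF.exists_le_isMaxW w''
    exact hnφ m hm (hkn hIntRe w' _ hφ m (hF.trans h hm) hmax)
  | e4 φ hE4 => exact fun w' _ hφ => h4 hE4 w' _ (memP φ) hφ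
  | e5 φ hE5 => exact fun w' _ hφ => h5 hE5 w' _ (memP φ) hφ
  | pnb _ hPNB => exact fun w' _ hφ => show _ ∈ F.E F.wbot from h6p hPNB w' ▸ hφ
  | nnb _ hNNB =>
    exact fun w' _ hnφ w'' _ hφ =>
      hnφ w' (hF.refl w') (hF.E_mono (hF.wbot_le w') (show _ ∈ F.E F.wbot from h6n hNNB w'' ▸ hφ))

theorem mem_interpFm_or_neg_of_isMaxW {w : W} (hw : F.IsMaxW w) (φ : Fm) :
    w ∈ interpFm F g (φ.or φ.neg) := by
  by_cases h : w ∈ interpFm F g φ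
  · exact Or.inl h
  · exact Or.inr fun w' hw' hφ => h (hw w' hw' ▸ hφ)

theorem Deriv.mem_interpFm {Ax : Fm → Prop} {tnd : Prop} {Φ : Set Fm} {φ : Fm}
    (hF : IsBaseFrame F) (hAx : ∀ ψ, Ax ψ → ∀ w, w ∈ interpFm F g ψ) {w : W}
    (hw : F.IsMaxW w) (hΦ : ∀ ψ ∈ Φ, w ∈ interpFm F g ψ) (h : Deriv Ax tnd Φ φ) :
    w ∈ interpFm F g φ := by
  induction h with
  | ax h => exact hAx _ h w
  | hyp h => exact hΦ _ h
  | tnd ψ => exact mem_interpFm_or_neg_of_isMaxW hw ψ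
  | an h => exact hAx _ h F.wbot
  | mp _ _ ihφψ ihφ => exact ihφψ w (hF.refl w) ihφ

end Soundness

theorem hasPNB_iff_hasNNB_of_mem_L5Logics {S : LogicSpec} (hS : S ∈ L5Logics) :
    S.hasPNB ↔ S.hasNNB := by
  rcases hS with rfl | rfl | rfl | rfl | rfl | rfl | rfl | rfl <;> exact Iff.rfl

/-- Soundness w.r.t. relational semantics: let `𝓛` be one of the
logics `EL5⁻`, `EL5`, `EkL5⁻`, `EkL5` (k ∈ {4,5,6}).  If `Φ ⊢_𝓛 φ`, then every
relational model based on an `𝓛`-frame which satisfies `Φ` (at the designated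
maximal world) also satisfies `φ`. -/
theorem stmt14 (S : LogicSpec) (hS : S ∈ L5Logics) (Φ : Set Fm) (φ : Fm)
    (h : Derives S Φ φ) :
    ∀ (W : Type) (F : EFrame W) (g : Nat → Set W),
      IsFrameFor S F → (∀ n, g n ∈ F.P) →
      (∀ ψ ∈ Φ, F.wT ∈ interpFm F.toFrame g ψ) →
      F.wT ∈ interpFm F.toFrame g φ := by
  intro W F g ⟨⟨hF, hmax⟩, h4, h5, h6, hkn⟩ hg hΦ
  have hPNB_iff := hasPNB_iff_hasNNB_of_mem_L5Logics hS
  have hAx (ψ : Fm) (hψ : IsAxiom S ψ) (w : W) : w ∈ interpFm F.toFrame g ψ :=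
    hψ.mem_interpFm hF hg h4 h5 (fun hp => h6 ⟨hp, hPNB_iff.1 hp⟩)
      (fun hn => h6 ⟨hPNB_iff.2 hn, hn⟩) hkn w
  exact Deriv.mem_interpFm hF hAx hmax hΦ h
end

section
/- Every IEL⁻-frame is an E5L5⁻-frame and every IEL-frame is an E5L5-frame; that is, the condition (IntCo) implies both the E4L5⁻-frame condition (A ∈ E(w) implies KA ∈ E(w)) and the E5L5⁻-frame condition (if A ∉ E(w') for all w' ≥ w, then (KA ⊃ ∅) ∈ E(w)). -/
namespace IntCoCond

variable {W : Type*} {F : Frame W}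

theorem e4Cond (hK : ∀ A ∈ F.P, F.kset A ∈ F.P) (h : IntCoCond F) : E4Cond F :=
  fun w A hA hAw => h w (F.kset A) (hK A hA) hAw

/-- If no world above `w` believes `A`, then `w` itself lies in `KA ⊃ ∅`, so (IntCo) applies. -/
theorem e5Cond (hempty : (∅ : Set W) ∈ F.P) (hhimp : ∀ A ∈ F.P, ∀ B ∈ F.P, F.himp A B ∈ F.P)
    (hK : ∀ A ∈ F.P, F.kset A ∈ F.P) (h : IntCoCond F) : E5Cond F := by
  intro w A hA hnot
  have hw : w ∈ F.himp (F.kset A) ∅ := fun w' hww' hw' => hnot w' hww' hw'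
  exact h w _ (hhimp _ (hK A hA) _ hempty) hw

end IntCoCond

theorem IsIELmFrame.e4Cond_and_e5Cond {W : Type*} {F : Frame W} (hF : IsIELmFrame F) :
    E4Cond F ∧ E5Cond F := by
  obtain ⟨⟨-, -, -, -, -, -, hempty, -, -, -, hhimp, hK, -⟩, hIntCo⟩ := hF
  exact ⟨hIntCo.e4Cond hK, hIntCo.e5Cond hempty hhimp hK⟩

/-- Every `IEL⁻`-frame is an `E5L5⁻`-frame and every `IEL`-frame
is an `E5L5`-frame: the condition (IntCo) implies both the `E4L5⁻`-frame
condition and the `E5L5⁻`-frame condition. -/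
theorem stmt17 {W : Type*} (F : Frame W) :
    (IsIELmFrame F → E4Cond F ∧ E5Cond F) ∧
    (IsIELFrame F → E4Cond F ∧ E5Cond F ∧ KnowCond F) :=
  ⟨IsIELmFrame.e4Cond_and_e5Cond,
    fun ⟨hF, hKnow⟩ => ⟨hF.e4Cond_and_e5Cond.1, hF.e4Cond_and_e5Cond.2, hKnow⟩⟩
end
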